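/- arXiv:1312.5875 — 2 statements merged into one kernel-verified Lean document; each statement's English description precedes it below -/
import Mathlib

section
/- Let G be a totally disconnected, locally compact group and α an expansive automorphism of G. Then G has an α-stable, σ-compact open subgroup. -/
open Filter Topology Set Pointwise

/-!
Let `K` be a compact identity neighbourhood and `H` the subgroup generated by its orbit
`S = ⋃ₙ αⁿ(K)`, `n ∈ ℤ`. Then `H` is open because it contains `K`, and `α`-stable
because `S` is. It is σ-compact because `H = ⋃ₘ (S ∪ S⁻¹)ᵐ` and products of σ-compact
sets are σ-compact.
-/

theorem Submonoid.coe_closure_eq_iUnion_pow {M : Type*} [Monoid M] (s : Set M) :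
    (Submonoid.closure s : Set M) = ⋃ n : ℕ, s ^ n := by
  refine Subset.antisymm (fun x hx => ?_)
    (iUnion_subset fun n => Submonoid.pow_subset subset_closure)
  induction hx using Submonoid.closure_induction with
  | mem x hx => exact mem_iUnion.2 ⟨1, by simpa using hx⟩
  | one => exact mem_iUnion.2 ⟨0, by simp⟩
  | mul x y _ _ hx hy =>
    obtain ⟨m, hx⟩ := mem_iUnion.1 hx
    obtain ⟨n, hy⟩ := mem_iUnion.1 hy
    exact mem_iUnion.2 ⟨m + n, pow_add s m n ▸ mul_mem_mul hx hy⟩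

section SigmaCompact

variable {X : Type*} [TopologicalSpace X]

theorem IsSigmaCompact.union {s t : Set X} (hs : IsSigmaCompact s) (ht : IsSigmaCompact t) :
    IsSigmaCompact (s ∪ t) := by
  rw [union_eq_iUnion]
  exact isSigmaCompact_iUnion _ fun b => by cases b <;> assumption

variable [Monoid X] [ContinuousMul X]

theorem IsSigmaCompact.mul {s t : Set X} (hs : IsSigmaCompact s) (ht : IsSigmaCompact t) :
    IsSigmaCompact (s * t) := by
  obtain ⟨K, hK, rfl⟩ := hs
  obtain ⟨L, hL, rfl⟩ := ht
  simp only [iUnion_mul, mul_iUnion]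
  exact isSigmaCompact_iUnion _ fun j =>
    isSigmaCompact_iUnion _ fun i => ((hK i).mul (hL j)).isSigmaCompact

theorem IsSigmaCompact.pow {s : Set X} (hs : IsSigmaCompact s) (n : ℕ) :
    IsSigmaCompact (s ^ n) := by
  induction n with
  | zero => exact isCompact_singleton.isSigmaCompact
  | succ n ih => rw [pow_succ]; exact ih.mul hs

theorem IsSigmaCompact.submonoidClosure {s : Set X} (hs : IsSigmaCompact s) :
    IsSigmaCompact (Submonoid.closure s : Set X) := by
  rw [Submonoid.coe_closure_eq_iUnion_pow]
  exact isSigmaCompact_iUnion _ hs.pow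

theorem IsSigmaCompact.subgroupClosure {G : Type*} [Group G] [TopologicalSpace G]
    [IsTopologicalGroup G] {s : Set G} (hs : IsSigmaCompact s) :
    IsSigmaCompact (Subgroup.closure s : Set G) := by
  rw [← Subgroup.coe_toSubmonoid, Subgroup.closure_toSubmonoid, ← image_inv_eq_inv]
  exact (hs.union (hs.image continuous_inv)).submonoidClosure

end SigmaCompact

namespace MulAut

variable {G : Type*} [Group G]

theorem continuous_zpow [TopologicalSpace G] {α : MulAut G} (hα : Continuous ⇑α)
    (hα' : Continuous ⇑(α⁻¹)) (n : ℤ) : Continuous ⇑(α ^ n) := by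
  induction n using Int.induction_on with
  | zero => exact continuous_id
  | succ k ih => rw [zpow_add_one]; exact ih.comp hα
  | pred k ih => rw [zpow_sub_one]; exact ih.comp hα'

theorem image_iUnion_zpow_image (α : MulAut G) (s : Set G) :
    α '' ⋃ n : ℤ, ⇑(α ^ n) '' s = ⋃ n : ℤ, ⇑(α ^ n) '' s := by
  simp only [image_iUnion, image_image, ← MulAut.mul_apply, ← zpow_one_add]
  exact (add_left_surjective 1).iUnion_comp fun n => ⇑(α ^ n) '' s

theorem image_subgroupClosure_of_image_eq (α : MulAut G) {s : Set G} (hs : α '' s = s) :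
    α '' (Subgroup.closure s : Set G) = Subgroup.closure s := by
  rw [← MulEquiv.coe_toMonoidHom, ← Subgroup.coe_map, MonoidHom.map_closure,
    MulEquiv.coe_toMonoidHom, hs]

end MulAut

theorem expansive_exists_stable_sigmaCompact_openSubgroup_general {G : Type*} [Group G]
    [TopologicalSpace G] [IsTopologicalGroup G] [LocallyCompactSpace G]
    (α : MulAut G) (hα : Continuous ⇑α) (hα' : Continuous ⇑(α⁻¹)) :
    ∃ H : OpenSubgroup G, ⇑α '' (H : Set G) = (H : Set G) ∧ IsSigmaCompact (H : Set G) := by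
  obtain ⟨K, hK, hK1⟩ := exists_compact_mem_nhds (1 : G)
  set S := ⋃ n : ℤ, ⇑(α ^ n) '' K
  have hKS : K ⊆ S := fun x hx => mem_iUnion.2 ⟨0, x, hx, rfl⟩
  have hopen : IsOpen (Subgroup.closure S : Set G) :=
    Subgroup.isOpen_of_mem_nhds _ (mem_of_superset hK1 (hKS.trans Subgroup.subset_closure))
  have hS : IsSigmaCompact S := isSigmaCompact_iUnion _ fun n =>
    (hK.image (α.continuous_zpow hα hα' n)).isSigmaCompact
  exact ⟨⟨_, hopen⟩, α.image_subgroupClosure_of_image_eq (α.image_iUnion_zpow_image K),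
    hS.subgroupClosure⟩

/-- A totally disconnected, locally compact group with an expansive automorphism
has an α-stable, σ-compact open subgroup. -/
theorem expansive_exists_stable_sigmaCompact_openSubgroup {G : Type*} [Group G]
    [TopologicalSpace G] [IsTopologicalGroup G] [T2Space G] [LocallyCompactSpace G]
    [TotallyDisconnectedSpace G]
    (α : MulAut G) (hα : Continuous ⇑α) (hα' : Continuous ⇑(α⁻¹))
    (hexp : ∃ U ∈ 𝓝 (1 : G), ⋂ n : ℤ, ⇑(α ^ n) '' U = {1}) :
    ∃ H : OpenSubgroup G, ⇑α '' (H : Set G) = (H : Set G) ∧ IsSigmaCompact (H : Set G) :=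
  expansive_exists_stable_sigmaCompact_openSubgroup_general α hα hα'
end

section
/- Let G be a topological group with topology τ and α a contractive automorphism of (G, τ). Suppose τ* and τ̂ are both locally compact group topologies on G that are finer than τ and such that α is a contractive automorphism with respect to each of them. Then τ* = τ̂. -/
open Filter Topology

/-!
On a set that is compact for a topology finer than a Hausdorff topology `τ`, the two topologies
coincide. So if a `τ₁`-compact set `K` is a `τ₂`-neighbourhood of some point `y`, then near `y`
the topology `τ₂` is finer than `τ|K = τ₁|K`, and by translation `τ₂` is finer than `τ₁`.
Such a `K` exists by the Baire category theorem in `(G, τ₂)`: for a compact `τ₁`-neighbourhood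
`K` of `1`, contractivity of `α` for `τ₁` makes the `τ₂`-closed sets `α⁻ⁿ(K)` cover `G`, so one
of them, itself `τ₁`-compact, has nonempty `τ₂`-interior. By symmetry `τ₁ = τ₂`.
-/

theorem MulAut.coe_pow {G : Type*} [Group G] (α : MulAut G) (n : ℕ) : ⇑(α ^ n) = (⇑α)^[n] :=
  congrArg DFunLike.coe (map_pow (MulAut.toPerm G) α n)

theorem MulAut.preimage_pow_eq_image_inv_pow {G : Type*} [Group G] (α : MulAut G) (n : ℕ)
    (s : Set G) : ⇑(α ^ n) ⁻¹' s = ⇑(α⁻¹ ^ n) '' s := by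
  rw [inv_pow]
  exact ((α ^ n).toEquiv.image_symm_eq_preimage s).symm

section FinerThanHausdorff

variable {X : Type*} {τ τ₁ τ₂ : TopologicalSpace X}

theorem isClosed_of_isCompact_of_le (h2 : @T2Space X τ) (h₁ : τ₁ ≤ τ) (h₂ : τ₂ ≤ τ)
    {K : Set X} (hK : @IsCompact X τ₁ K) : IsClosed[τ₂] K := by
  have hKτ : @IsCompact X τ K := by
    simpa using @IsCompact.image X X τ₁ τ K id hK (continuous_id_of_le h₁)
  exact (@IsCompact.isClosed X τ h2 K hKτ).mono h₂

theorem nhdsWithin_eq_of_isCompact_of_le (h2 : @T2Space X τ) (h₁ : τ₁ ≤ τ) {K : Set X}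
    (hK : @IsCompact X τ₁ K) (x : X) : @nhdsWithin X τ₁ x K = @nhdsWithin X τ x K := by
  refine le_antisymm (inf_le_inf_right _ (nhds_mono h₁)) (le_iff_ultrafilter.2 fun U hU ↦ ?_)
  have hUK : (U : Filter X) ≤ 𝓟 K := hU.trans inf_le_right
  obtain ⟨y, -, hy⟩ := hK.ultrafilter_le_nhds U hUK
  -- `U` converges to `y` in `τ₁`, hence in `τ`, and to `x` in `τ`
  have hyx : y = x := @eq_of_nhds_neBot X τ h2 y x
    (neBot_of_le (le_inf (hy.trans (nhds_mono h₁)) (hU.trans inf_le_left)))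
  exact le_inf (hyx ▸ hy) hUK

theorem nhds_le_nhds_of_isCompact_mem_nhds (h2 : @T2Space X τ) (h₁ : τ₁ ≤ τ) (h₂ : τ₂ ≤ τ)
    {K : Set X} {x : X} (hK : @IsCompact X τ₁ K) (hKx : K ∈ @nhds X τ₂ x) :
    @nhds X τ₂ x ≤ @nhds X τ₁ x :=
  calc @nhds X τ₂ x = @nhdsWithin X τ₂ x K := ((@nhdsWithin_eq_nhds X τ₂ x K).2 hKx).symm
    _ ≤ @nhdsWithin X τ x K := inf_le_inf_right _ (nhds_mono h₂)
    _ = @nhdsWithin X τ₁ x K := (nhdsWithin_eq_of_isCompact_of_le h2 h₁ hK x).symm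
    _ ≤ @nhds X τ₁ x := @nhdsWithin_le_nhds X τ₁ x K

end FinerThanHausdorff

section GroupTopology

variable {G : Type*} [Group G] {τ τ₁ τ₂ : TopologicalSpace G}

theorem le_of_nhds_le_nhds_at (hm₁ : @SeparatelyContinuousMul G τ₁ _)
    (hm₂ : @SeparatelyContinuousMul G τ₂ _) {y : G} (h : @nhds G τ₂ y ≤ @nhds G τ₁ y) :
    τ₂ ≤ τ₁ := by
  refine le_of_nhds_le_nhds fun z ↦ ?_
  calc @nhds G τ₂ z = map (z * y⁻¹ * ·) (@nhds G τ₂ y) := by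
        simpa using ((@Homeomorph.mulLeft G τ₂ _ hm₂ (z * y⁻¹)).map_nhds_eq y).symm
    _ ≤ map (z * y⁻¹ * ·) (@nhds G τ₁ y) := map_mono h
    _ ≤ @nhds G τ₁ z := by
        have := @Continuous.tendsto G G τ₁ τ₁ _ (@continuous_const_mul G τ₁ _ hm₁ (z * y⁻¹)) y
        rwa [inv_mul_cancel_right] at this

theorem le_of_isCompact_interior_nonempty (hm₁ : @SeparatelyContinuousMul G τ₁ _)
    (hm₂ : @SeparatelyContinuousMul G τ₂ _) (h2 : @T2Space G τ) (h₁ : τ₁ ≤ τ) (h₂ : τ₂ ≤ τ)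
    {K : Set G} (hK : @IsCompact G τ₁ K) (hKint : (@interior G τ₂ K).Nonempty) : τ₂ ≤ τ₁ := by
  obtain ⟨y, hy⟩ := hKint
  exact le_of_nhds_le_nhds_at hm₁ hm₂
    (nhds_le_nhds_of_isCompact_mem_nhds h2 h₁ h₂ hK (@mem_interior_iff_mem_nhds G τ₂ y K |>.1 hy))

theorem exists_isCompact_interior_nonempty_of_tendsto_pow (α : MulAut G)
    (h2 : @T2Space G τ) (h₁ : τ₁ ≤ τ) (h₂ : τ₂ ≤ τ)
    (hlc₁ : @WeaklyLocallyCompactSpace G τ₁) (hb₂ : @BaireSpace G τ₂)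
    (hcont₁' : Continuous[τ₁, τ₁] ⇑(α⁻¹)) (hcont₂ : Continuous[τ₂, τ₂] ⇑α)
    (hc₁ : ∀ g : G, Tendsto (fun n ↦ (α ^ n) g) atTop (@nhds G τ₁ 1)) :
    ∃ K : Set G, @IsCompact G τ₁ K ∧ (@interior G τ₂ K).Nonempty := by
  obtain ⟨K, hK, hK1⟩ := @exists_compact_mem_nhds G τ₁ hlc₁ 1
  have hcover : ⋃ n : ℕ, ⇑(α ^ n) ⁻¹' K = Set.univ :=
    Set.eq_univ_of_forall fun g ↦ Set.mem_iUnion.2 ((hc₁ g).eventually_mem hK1).exists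
  have hclosed (n : ℕ) : IsClosed[τ₂] (⇑(α ^ n) ⁻¹' K) := by
    rw [MulAut.coe_pow]
    exact (isClosed_of_isCompact_of_le h2 h₁ h₂ hK).preimage (@Continuous.iterate G τ₂ _ hcont₂ n)
  have : Nonempty G := ⟨1⟩
  obtain ⟨n, hn⟩ := @nonempty_interior_of_iUnion_of_closed G ℕ τ₂ hb₂ _ _ _ hclosed hcover
  refine ⟨_, ?_, hn⟩
  rw [MulAut.preimage_pow_eq_image_inv_pow, MulAut.coe_pow]
  exact @IsCompact.image G G τ₁ τ₁ _ _ hK (@Continuous.iterate G τ₁ _ hcont₁' n)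

end GroupTopology

theorem unique_locally_compact_refinement_general {G : Type*} [Group G]
    (τ τ₁ τ₂ : TopologicalSpace G) (α : MulAut G)
    (hτ₁ : @IsTopologicalGroup G τ₁ _)
    (hτ₂ : @IsTopologicalGroup G τ₂ _)
    (h2 : @T2Space G τ)
    (hlc₁ : @LocallyCompactSpace G τ₁) (hlc₂ : @LocallyCompactSpace G τ₂)
    (hfine₁ : τ₁ ≤ τ) (hfine₂ : τ₂ ≤ τ)
    (hcont₁ : @Continuous G G τ₁ τ₁ ⇑α) (hcont₁' : @Continuous G G τ₁ τ₁ ⇑(α⁻¹))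
    (hc₁ : ∀ g : G, @Filter.Tendsto ℕ G (fun n => (α ^ n) g) atTop (@nhds G τ₁ 1))
    (hcont₂ : @Continuous G G τ₂ τ₂ ⇑α) (hcont₂' : @Continuous G G τ₂ τ₂ ⇑(α⁻¹))
    (hc₂ : ∀ g : G, @Filter.Tendsto ℕ G (fun n => (α ^ n) g) atTop (@nhds G τ₂ 1)) :
    τ₁ = τ₂ := by
  have hb₁ : @BaireSpace G τ₁ := by let := τ₁; infer_instance
  have hb₂ : @BaireSpace G τ₂ := by let := τ₂; infer_instance
  have hw₁ : @WeaklyLocallyCompactSpace G τ₁ := by let := τ₁; infer_instance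
  have hw₂ : @WeaklyLocallyCompactSpace G τ₂ := by let := τ₂; infer_instance
  obtain ⟨K₁, hK₁, hK₁int⟩ := exists_isCompact_interior_nonempty_of_tendsto_pow α h2 hfine₁
    hfine₂ hw₁ hb₂ hcont₁' hcont₂ hc₁
  obtain ⟨K₂, hK₂, hK₂int⟩ := exists_isCompact_interior_nonempty_of_tendsto_pow α h2 hfine₂
    hfine₁ hw₂ hb₁ hcont₂' hcont₁ hc₂
  exact le_antisymm
    (le_of_isCompact_interior_nonempty inferInstance inferInstance h2 hfine₂ hfine₁ hK₂ hK₂int)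
    (le_of_isCompact_interior_nonempty inferInstance inferInstance h2 hfine₁ hfine₂ hK₁ hK₁int)

/-- Uniqueness of a finer locally compact group topology making a contractive
automorphism contractive. -/
theorem unique_locally_compact_refinement {G : Type*} [Group G]
    (τ τ₁ τ₂ : TopologicalSpace G) (α : MulAut G)
    (hτ : @IsTopologicalGroup G τ _) (hτ₁ : @IsTopologicalGroup G τ₁ _)
    (hτ₂ : @IsTopologicalGroup G τ₂ _)
    (h2 : @T2Space G τ) (h2₁ : @T2Space G τ₁) (h2₂ : @T2Space G τ₂)
    (hlc₁ : @LocallyCompactSpace G τ₁) (hlc₂ : @LocallyCompactSpace G τ₂)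
    (hfine₁ : τ₁ ≤ τ) (hfine₂ : τ₂ ≤ τ)
    (hcont : @Continuous G G τ τ ⇑α) (hcont' : @Continuous G G τ τ ⇑(α⁻¹))
    (hc : ∀ g : G, @Filter.Tendsto ℕ G (fun n => (α ^ n) g) atTop (@nhds G τ 1))
    (hcont₁ : @Continuous G G τ₁ τ₁ ⇑α) (hcont₁' : @Continuous G G τ₁ τ₁ ⇑(α⁻¹))
    (hc₁ : ∀ g : G, @Filter.Tendsto ℕ G (fun n => (α ^ n) g) atTop (@nhds G τ₁ 1))
    (hcont₂ : @Continuous G G τ₂ τ₂ ⇑α) (hcont₂' : @Continuous G G τ₂ τ₂ ⇑(α⁻¹))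
    (hc₂ : ∀ g : G, @Filter.Tendsto ℕ G (fun n => (α ^ n) g) atTop (@nhds G τ₂ 1)) :
    τ₁ = τ₂ :=
  unique_locally_compact_refinement_general τ τ₁ τ₂ α hτ₁ hτ₂ h2 hlc₁ hlc₂ hfine₁ hfine₂ hcont₁
    hcont₁' hc₁ hcont₂ hcont₂' hc₂
end
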